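/- arXiv:math/0304310 — 3 statements merged into one kernel-verified Lean document; each statement's English description precedes it below -/
import Mathlib

section
/- Let q : ℕ → ℚ be the sequence q n = (2n+1) / 2^(Nat.size (2n+1)) where Nat.size m is the number of binary digits of m. Then the real-valued sequence (q n : ℝ) does not converge: along the odd numbers of the form 2^k − 1 (i.e., n = 2^(k−1) − 1) the terms (2^k − 1)/2^k tend to 1, while along the odd numbers of the form 2^k + 1 (i.e., n = 2^(k−1)) the terms (2^k + 1)/2^(k+1) tend to 1/2, so there is no real number L with q n → L. -/
open Filter Topology

/-- The rational whose binary fractional digits are the binary digits of the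
n-th odd number. -/
def q (n : ℕ) : ℚ := (2 * n + 1 : ℚ) / 2 ^ (Nat.size (2 * n + 1))

theorem Nat.size_eq_succ_of_two_pow_le_of_lt {m k : ℕ} (h₁ : 2 ^ k ≤ m)
    (h₂ : m < 2 ^ (k + 1)) :
    m.size = k + 1 :=
  le_antisymm (Nat.size_le.2 h₂) (Nat.lt_size.2 h₁)

theorem q_two_pow_sub_one (k : ℕ) : q (2 ^ k - 1) = 1 - (1 / 2 : ℚ) ^ (k + 1) := by
  have hk : 1 ≤ 2 ^ k := Nat.one_le_two_pow
  have hodd : 2 * (2 ^ k - 1) + 1 = 2 ^ (k + 1) - 1 := by rw [pow_succ]; omega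
  have hsize : (2 * (2 ^ k - 1) + 1).size = k + 1 := by
    refine Nat.size_eq_succ_of_two_pow_le_of_lt ?_ (by omega)
    rw [hodd, pow_succ]; omega
  rw [q, hsize, one_div_pow]
  push_cast [hk]
  field_simp
  ring

theorem q_two_pow (k : ℕ) : q (2 ^ k) = 1 / 2 + (1 / 2 : ℚ) ^ (k + 2) := by
  have hk : 1 ≤ 2 ^ k := Nat.one_le_two_pow
  have hsize : (2 * 2 ^ k + 1).size = k + 2 :=
    Nat.size_eq_succ_of_two_pow_le_of_lt (by rw [pow_succ]; omega)
      (by rw [pow_succ, pow_succ]; omega)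
  rw [q, hsize, one_div_pow]
  push_cast
  field_simp
  ring

theorem not_exists_tendsto_of_tendsto_comp_of_ne {α β X : Type*} [TopologicalSpace X] [T2Space X]
    {u : α → X} {l : Filter α} {l' : Filter β} [l'.NeBot] {φ ψ : β → α}
    (hφ : Tendsto φ l' l) (hψ : Tendsto ψ l' l) {a b : X}
    (ha : Tendsto (u ∘ φ) l' (𝓝 a)) (hb : Tendsto (u ∘ ψ) l' (𝓝 b)) (hab : a ≠ b) :
    ¬ ∃ L, Tendsto u l (𝓝 L) := by
  rintro ⟨L, hL⟩
  exact hab <| (tendsto_nhds_unique ha (hL.comp hφ)).trans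
    (tendsto_nhds_unique (hL.comp hψ) hb)

/-- The real-valued sequence `q n` does not converge: along the odd numbers
2^(k+1) − 1 (i.e. n = 2^k − 1) the terms tend to 1, along the odd numbers
2^(k+1) + 1 (i.e. n = 2^k) the terms tend to 1/2, so there is no limit L. -/
theorem q_not_convergent :
    Tendsto (fun k : ℕ => (q (2 ^ k - 1) : ℝ)) atTop (𝓝 1) ∧
    Tendsto (fun k : ℕ => (q (2 ^ k) : ℝ)) atTop (𝓝 (1 / 2)) ∧
    ¬ ∃ L : ℝ, Tendsto (fun n : ℕ => (q n : ℝ)) atTop (𝓝 L) := by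
  have hpow (j : ℕ) : Tendsto (fun k : ℕ => (1 / 2 : ℝ) ^ (k + j)) atTop (𝓝 0) :=
    (tendsto_pow_atTop_nhds_zero_of_lt_one (by norm_num) (by norm_num)).comp
      (tendsto_add_atTop_nat j)
  have hA : Tendsto (fun k : ℕ => (q (2 ^ k - 1) : ℝ)) atTop (𝓝 1) := by
    simpa [q_two_pow_sub_one] using (hpow 1).const_sub (1 : ℝ)
  have hB : Tendsto (fun k : ℕ => (q (2 ^ k) : ℝ)) atTop (𝓝 (1 / 2)) := by
    simpa [q_two_pow] using (hpow 2).const_add (1 / 2 : ℝ)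
  have hA_index : Tendsto (fun k : ℕ => 2 ^ k - 1) atTop atTop :=
    tendsto_sub_atTop_nat 1 |>.comp (tendsto_pow_atTop_atTop_of_one_lt one_lt_two)
  refine ⟨hA, hB, not_exists_tendsto_of_tendsto_comp_of_ne hA_index
    (tendsto_pow_atTop_atTop_of_one_lt one_lt_two) hA hB (by norm_num)⟩
end

section
/- The binary sequence P : Nat.Partrec.Code → Bool defined by P c = true if the code c is total (∀ n, (c.eval n).Dom) and P c = false otherwise — i.e., P c = decide that c is satisfactory — is not a computable function. -/
open scoped Classical

open Nat.Partrec (Code)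

/-! Totality is an extensional property of codes that holds of the constant function `0` but not of
the nowhere-defined function, so by Rice's theorem it is not decidable by a computable function. -/

theorem ComputablePred.totality_problem : ¬ComputablePred fun c : Code => ∀ n, (c.eval n).Dom
  | h => rice {f | ∀ n, (f n).Dom} h Nat.Partrec.zero Nat.Partrec.none (fun _ => trivial) 0

/-- Turing's sequence P: `P c = true` iff the code `c` is satisfactory (total).
This function is definable but not computable (Turing's claim (xix)). -/
theorem P_not_computable :
    ¬ Computable (fun c : Nat.Partrec.Code => decide (∀ n : ℕ, (c.eval n).Dom)) :=
  fun h => ComputablePred.totality_problem ⟨_, h⟩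
end

section
/- There is no computable function D : Nat.Partrec.Code → Bool such that D c = true if and only if ∀ n, (c.eval n).Dom. -/
/-- Turing's machine-H argument: there is no computable Boolean function `D`
deciding whether a code is circle-free (total). -/
theorem no_circle_free_decider :
    ¬ ∃ D : Nat.Partrec.Code → Bool, Computable D ∧
      ∀ c : Nat.Partrec.Code, D c = true ↔ ∀ n : ℕ, (c.eval n).Dom := by
  classical
  rintro ⟨D, hD, hiff⟩
  have h : ComputablePred fun c : Nat.Partrec.Code =>
      Nat.Partrec.Code.eval c ∈ {f : ℕ →. ℕ | ∀ n, (f n).Dom} := by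
    refine ⟨inferInstance, ?_⟩
    exact hD.of_eq fun c => by
      by_cases hc : ∀ n, (c.eval n).Dom
      · simp [hc, (hiff c).2 hc]
      · simp only [Set.mem_setOf_eq, hc, decide_false]
        by_contra h'
        exact hc ((hiff c).1 (by revert h'; cases D c <;> simp))
  exact (ComputablePred.rice _ h Nat.Partrec.zero Nat.Partrec.none
    (fun n => trivial) 0)
end
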